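/- For any ζ = (ζ_1,…,ζ_d) ∈ ℂ^d ∖ {1_d} with |ζ_j| = 1 for j = 1,…,d, one has 𝒫_V(z,λ) ≢ 𝒫_V(ζ⊙z,λ), where ζ⊙z = (ζ_1z_1,…,ζ_dz_d). -/

import Mathlib

open MeasureTheory Polynomial

noncomputable section

/-- Multivariate Laurent polynomials in `d` variables over `ℂ`. -/
abbrev MvL (d : ℕ) : Type := AddMonoidAlgebra ℂ (Fin d →₀ ℤ)

/-- Evaluation of a Laurent polynomial at a point `z ∈ (ℂ^*)^d`. -/
noncomputable def evalMvL {d : ℕ} (z : Fin d → ℂ) (p : MvL d) : ℂ :=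
  Finsupp.sum p.coeff fun n c => c * ∏ j, z j ^ (n j)

/-- Evaluation of an element of `(MvL d)[λ]` at `(z, lam)`. -/
noncomputable def evalP {d : ℕ} (z : Fin d → ℂ) (lam : ℂ) (P : Polynomial (MvL d)) : ℂ :=
  P.sum fun m a => evalMvL z a * lam ^ m

/-- `det (𝒜(z) - λ I)` as a Laurent polynomial in `z` and polynomial in `λ`. -/
noncomputable def detP {d Q : ℕ} (M : Matrix (Fin Q) (Fin Q) (MvL d)) : Polynomial (MvL d) :=
  Matrix.det (Matrix.of fun i j => Polynomial.C (M i j) - if i = j then Polynomial.X else 0)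



/-- The unique Floquet extension: for `u` on the fundamental domain `W = ∏ [0, q j)`,
`extPer q hq z u m` is `ũ(m)` where `ũ(n + q j • e j) = z j * ũ(n)`. -/
noncomputable def extPer {d : ℕ} (q : Fin d → ℕ) (hq : ∀ j, 0 < q j) (z : Fin d → ℂ)
    (u : ((j : Fin d) → Fin (q j)) → ℂ) (m : Fin d → ℤ) : ℂ :=
  (∏ j, z j ^ (m j / (q j : ℤ))) *
    u (fun j => ⟨(m j % (q j : ℤ)).toNat, by
      have h0 : (0:ℤ) < (q j : ℤ) := by exact_mod_cast hq j
      have h1 : 0 ≤ m j % (q j : ℤ) := Int.emod_nonneg _ h0.ne'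
      have h2 : m j % (q j : ℤ) < (q j : ℤ) := Int.emod_lt_of_pos _ h0
      omega⟩)

/-- The Floquet matrix `𝒟_V(z)` of `Δ + V` with boundary condition `u(n + q j e j) = z j u(n)`. -/
noncomputable def DVmat {d : ℕ} (q : Fin d → ℕ) (hq : ∀ j, 0 < q j)
    (V : (Fin d → ℤ) → ℝ) (z : Fin d → ℂ) :
    Matrix ((j : Fin d) → Fin (q j)) ((j : Fin d) → Fin (q j)) ℂ :=
  Matrix.of fun n n' =>
    (∑ j, (extPer q hq z (Pi.single n' 1) (fun i => ((n i : ℕ) : ℤ) + if i = j then 1 else 0)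
        + extPer q hq z (Pi.single n' 1) (fun i => ((n i : ℕ) : ℤ) - if i = j then 1 else 0)))
    + (V (fun i => ((n i : ℕ) : ℤ)) : ℂ) * (if n = n' then (1:ℂ) else 0)

/-- `𝒫_V(z, λ) = det (𝒟_V(z) - λ I)`. -/
noncomputable def PVfun {d : ℕ} (q : Fin d → ℕ) (hq : ∀ j, 0 < q j)
    (V : (Fin d → ℤ) → ℝ) (z : Fin d → ℂ) (lam : ℂ) : ℂ :=
  Matrix.det (DVmat q hq V z - lam • (1 : Matrix _ _ ℂ))

/-- Discrete Fourier transform of the periodic potential `V`. -/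
noncomputable def Vhat {d : ℕ} (q : Fin d → ℕ) (V : (Fin d → ℤ) → ℝ) (m : Fin d → ℤ) : ℂ :=
  (((∏ j, q j : ℕ) : ℂ))⁻¹ * ∑ n : ((j : Fin d) → Fin (q j)),
    (V (fun i => ((n i : ℕ) : ℤ)) : ℂ) *
      Complex.exp (-(2 * (Real.pi : ℂ) * Complex.I) *
        ∑ j, (m j : ℂ) * ((n j : ℕ) : ℂ) / ((q j : ℕ) : ℂ))

/-- The diagonal matrix `B₀(z)` with entries `∑ j (ρ^j_{n j} z j + (ρ^j_{n j} z j)⁻¹)`. -/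
noncomputable def B0mat {d : ℕ} (q : Fin d → ℕ) (z : Fin d → ℂ) :
    Matrix ((j : Fin d) → Fin (q j)) ((j : Fin d) → Fin (q j)) ℂ :=
  Matrix.diagonal fun n => ∑ j,
    (Complex.exp (2 * (Real.pi : ℂ) * Complex.I * ((n j : ℕ) : ℂ) / ((q j : ℕ) : ℂ)) * z j
      + (Complex.exp (2 * (Real.pi : ℂ) * Complex.I * ((n j : ℕ) : ℂ) / ((q j : ℕ) : ℂ)) * z j)⁻¹)

/-- The matrix `B_V` with entries `V̂(n - n')`. -/
noncomputable def BVmat {d : ℕ} (q : Fin d → ℕ) (V : (Fin d → ℤ) → ℝ) :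
    Matrix ((j : Fin d) → Fin (q j)) ((j : Fin d) → Fin (q j)) ℂ :=
  Matrix.of fun n n' => Vhat q V (fun i => ((n i : ℕ) : ℤ) - ((n' i : ℕ) : ℤ))

/-- `h(z, λ) = ∏_{n ∈ W} ((∑ j ρ^j_{n j} z j) - λ)` as a function. -/
noncomputable def hFun {d : ℕ} (q : Fin d → ℕ) (z : Fin d → ℂ) (lam : ℂ) : ℂ :=
  ∏ n : ((j : Fin d) → Fin (q j)),
    ((∑ j, Complex.exp (2 * (Real.pi : ℂ) * Complex.I * ((n j : ℕ) : ℂ) / ((q j : ℕ) : ℂ)) * z j)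
      - lam)

/-- The Laurent monomial `c * z j`. -/
noncomputable def zVar {d : ℕ} (j : Fin d) (c : ℂ) : MvL d :=
  AddMonoidAlgebra.single (Finsupp.single j (1:ℤ)) c

/-- `h(z, λ)` as a Laurent polynomial in `z` and polynomial in `λ`. -/
noncomputable def hPoly {d : ℕ} (q : Fin d → ℕ) : Polynomial (MvL d) :=
  ∏ n : ((j : Fin d) → Fin (q j)),
    (Polynomial.C (∑ j, zVar j
        (Complex.exp (2 * (Real.pi : ℂ) * Complex.I * ((n j : ℕ) : ℂ) / ((q j : ℕ) : ℂ))))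
      - Polynomial.X)



end

/-!
Pick `j` with `ζ_j ≠ 1` and `ω` with `ω ^ q_j = ζ_j`. Conjugating by the gauge `diag (w ^ n_j)`
moves a factor `w ^ q_j` of `z_j` onto the hopping in direction `j`, so `𝒟_V` at that point is
similar to `w F + w⁻¹ B + R`, with `F`, `B` the forward and backward hoppings in direction `j`.
For `w = ω / ε` and `λ = 1 / ε` this gives `ε ^ Q 𝒫_V = det (ω F - 1 + ε R + ω⁻¹ ε² B)`, a
polynomial in `ε`. If `𝒫_V(z, λ) = 𝒫_V(ζ ⊙ z, λ)` identically, comparing `z_j = ε ^ (-q_j)` with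
`ζ_j z_j = (ω / ε) ^ q_j` and letting `ε → 0` gives `det (F - 1) = det (ω F - 1)`, where `F`,
now taken at `z_j = 1`, is the permutation matrix of the cyclic shift `n ↦ n + e_j` of `W`. The left
side vanishes since `F` fixes the constant vector, and `F ^ q_j = 1` then forces `ω ^ q_j = 1`.
-/

open Finset Matrix

namespace Matrix

variable {ι K : Type*} [Fintype ι] [DecidableEq ι]

theorem one_submatrix_pow [Semiring K] (f : ι → ι) (k : ℕ) :
    (1 : Matrix ι ι K).submatrix f id ^ k = (1 : Matrix ι ι K).submatrix f^[k] id := by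
  induction k with
  | zero => simp
  | succ k ih =>
    rw [pow_succ', ih, Function.iterate_succ]
    ext a b
    simp only [mul_apply, submatrix_apply, id, one_apply, ite_mul, one_mul, zero_mul,
      Finset.sum_ite_eq, Finset.mem_univ, if_true, Function.comp_apply]

theorem det_one_submatrix_sub_one [Field K] [Nonempty ι] (f : ι → ι) :
    ((1 : Matrix ι ι K).submatrix f id - 1).det = 0 := by
  rw [← exists_mulVec_eq_zero_iff]
  refine ⟨fun _ => 1, Function.ne_iff.mpr ⟨Classical.arbitrary ι, one_ne_zero⟩, ?_⟩
  ext a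
  simp [mulVec, dotProduct, one_apply]

theorem pow_eq_one_of_det_smul_sub_one_eq_zero [Field K] {A : Matrix ι ι K} {k : ℕ}
    (hA : A ^ k = 1) {ω : K} (h : (ω • A - 1).det = 0) : ω ^ k = 1 := by
  -- `(∑ i < k, (ω • A) ^ i) * (ω • A - 1) = (ω • A) ^ k - 1 = (ω ^ k - 1) • 1`
  have hgeom := congrArg det (geom_sum_mul (ω • A) k)
  rw [det_mul, h, mul_zero, _root_.smul_pow, hA, ← one_smul K (1 : Matrix ι ι K), smul_smul,
    mul_one, ← sub_smul, det_smul, det_one, mul_one] at hgeom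
  exact sub_eq_zero.mp (pow_eq_zero_iff'.mp hgeom.symm).1

theorem diagonal_mul_diagonal_inv [Field K] {τ : ι → K} (hτ : ∀ i, τ i ≠ 0) :
    diagonal τ * diagonal τ⁻¹ = 1 := by
  rw [diagonal_mul_diagonal, ← diagonal_one]
  exact congrArg diagonal (funext fun i => mul_inv_cancel₀ (hτ i))

theorem det_diagonal_mul_mul_diagonal_inv [Field K] {τ : ι → K} (hτ : ∀ i, τ i ≠ 0)
    (A : Matrix ι ι K) : (diagonal τ * A * diagonal τ⁻¹).det = A.det := by
  rw [det_mul, det_mul, mul_right_comm, ← det_mul, diagonal_mul_diagonal_inv hτ, det_one,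
    one_mul]

end Matrix

namespace Floquet

variable {d : ℕ} {q : Fin d → ℕ} (hq : ∀ j, 0 < q j)

/-- The fundamental domain `W`. -/
abbrev Cell (q : Fin d → ℕ) : Type := (j : Fin d) → Fin (q j)

def toCell (m : Fin d → ℤ) : Cell q := fun j =>
  ⟨(m j % q j).toNat, by
    have hqj : (0 : ℤ) < q j := by exact_mod_cast hq j
    have := Int.emod_lt_of_pos (m j) hqj
    have := Int.emod_nonneg (m j) hqj.ne'
    omega⟩

theorem extPer_eq_prod_mul (z : Fin d → ℂ) (u : Cell q → ℂ) (m : Fin d → ℤ) :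
    extPer q hq z u m = (∏ j, z j ^ (m j / q j)) * u (toCell hq m) := rfl

theorem coe_toCell (m : Fin d → ℤ) (j : Fin d) : ((toCell hq m j : ℕ) : ℤ) = m j % q j :=
  Int.toNat_of_nonneg (Int.emod_nonneg _ (by exact_mod_cast (hq j).ne'))

theorem toCell_ext {m m' : Fin d → ℤ} (h : ∀ j, m j % q j = m' j % q j) :
    toCell hq m = toCell hq m' :=
  funext fun j => Fin.ext <| by
    exact_mod_cast (coe_toCell hq m j).trans ((h j).trans (coe_toCell hq m' j).symm)

theorem toCell_coe (n : Cell q) : toCell hq (fun i => n i) = n :=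
  funext fun j => Fin.ext <| by
    have := coe_toCell hq (fun i => n i) j
    rw [Int.emod_eq_of_lt (by positivity) (by exact_mod_cast (n j).isLt)] at this
    exact_mod_cast this

def shift (j : Fin d) (n : Cell q) : Cell q :=
  toCell hq fun i => n i + if i = j then 1 else 0

theorem shift_iterate (j : Fin d) (k : ℕ) (n : Cell q) :
    (shift hq j)^[k] n = toCell hq fun i => n i + if i = j then (k : ℤ) else 0 := by
  induction k with
  | zero => simpa using (toCell_coe hq n).symm
  | succ k ih =>
    rw [Function.iterate_succ_apply', ih, shift]
    refine toCell_ext hq fun i => ?_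
    rw [coe_toCell, Int.emod_add_emod]
    split_ifs <;> push_cast <;> ring_nf

theorem shift_iterate_period (j : Fin d) : (shift hq j)^[q j] = id := by
  funext n
  rw [shift_iterate, id]
  refine (toCell_ext hq fun i => ?_).trans (toCell_coe hq n)
  split_ifs with h
  · subst h; simp
  · simp

variable (V : (Fin d → ℤ) → ℝ) (z : Fin d → ℂ)

noncomputable def hopFwd (j : Fin d) : Matrix (Cell q) (Cell q) ℂ :=
  of fun n n' => extPer q hq z (Pi.single n' 1) fun i => n i + if i = j then 1 else 0

noncomputable def hopBwd (j : Fin d) : Matrix (Cell q) (Cell q) ℂ :=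
  of fun n n' => extPer q hq z (Pi.single n' 1) fun i => n i - if i = j then 1 else 0

noncomputable def potential : Matrix (Cell q) (Cell q) ℂ :=
  diagonal fun n => (V fun i => n i : ℂ)

noncomputable def weightedDV (c : Fin d → ℂ) : Matrix (Cell q) (Cell q) ℂ :=
  ∑ i, (c i • hopFwd hq z i + (c i)⁻¹ • hopBwd hq z i) + potential V

theorem DVmat_eq_weightedDV_one : DVmat q hq V z = weightedDV hq V z 1 := by
  ext n n'
  simp [DVmat, weightedDV, hopFwd, hopBwd, potential, Matrix.sum_apply, diagonal_apply]

theorem hopFwd_apply (j : Fin d) (n n' : Cell q) :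
    hopFwd hq z j n n'
      = z j ^ (((n j : ℕ) + 1 : ℤ) / q j)
        * (1 : Matrix (Cell q) (Cell q) ℂ) (shift hq j n) n' := by
  rw [hopFwd, of_apply, extPer_eq_prod_mul, Fintype.prod_eq_single j fun i hi => ?_]
  · rw [Pi.single_apply, shift, one_apply, if_pos rfl]
  · rw [if_neg hi, add_zero, Int.ediv_eq_zero_of_lt (by positivity) (by exact_mod_cast (n i).isLt),
      zpow_zero]

theorem hopFwd_congr {z' : Fin d → ℂ} {j : Fin d} (h : z j = z' j) :
    hopFwd hq z j = hopFwd hq z' j := by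
  ext n n'
  rw [hopFwd_apply, hopFwd_apply, h]

theorem hopFwd_one (j : Fin d) :
    hopFwd hq 1 j = (1 : Matrix (Cell q) (Cell q) ℂ).submatrix (shift hq j) id := by
  ext n n'
  rw [hopFwd_apply, Pi.one_apply, _root_.one_zpow, one_mul, submatrix_apply, id]

theorem hopFwd_one_pow_period (j : Fin d) : hopFwd hq 1 j ^ q j = 1 := by
  rw [hopFwd_one, one_submatrix_pow, shift_iterate_period, submatrix_id_id]

theorem det_hopFwd_one_sub_one (j : Fin d) : (hopFwd hq 1 j - 1).det = 0 :=
  have : Nonempty (Cell q) := ⟨fun i => ⟨0, hq i⟩⟩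
  hopFwd_one hq j ▸ det_one_submatrix_sub_one _

theorem extPer_mulSingle_pow_mul (j : Fin d) (w : ℂ) (n' : Cell q) (m : Fin d → ℤ) :
    extPer q hq (Pi.mulSingle j (w ^ q j) * z) (Pi.single n' 1) m
      = w ^ (m j - (n' j : ℕ)) * extPer q hq z (Pi.single n' 1) m := by
  rw [extPer_eq_prod_mul, extPer_eq_prod_mul]
  by_cases h : toCell hq m = n'
  · subst h
    simp only [Pi.mul_apply, mul_zpow, prod_mul_distrib]
    rw [Fintype.prod_eq_single j fun i hi => by rw [Pi.mulSingle_eq_of_ne hi, _root_.one_zpow],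
      Pi.mulSingle_eq_same, ← zpow_natCast, ← _root_.zpow_mul, coe_toCell, Int.emod_def]
    ring_nf
  · simp [h]

def gauge (w : ℂ) (j : Fin d) (n : Cell q) : ℂ := w ^ (n j : ℕ)

theorem gauge_conj_apply {w : ℂ} (hw : w ≠ 0) (j : Fin d) (A : Matrix (Cell q) (Cell q) ℂ)
    (n n' : Cell q) :
    (diagonal (gauge w j) * A * diagonal (gauge w j)⁻¹ : Matrix (Cell q) (Cell q) ℂ) n n'
      = w ^ ((n j : ℕ) - (n' j : ℕ) : ℤ) * A n n' := by
  rw [mul_diagonal, diagonal_mul, Pi.inv_apply, gauge, gauge, zpow_sub₀ hw, zpow_natCast,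
    zpow_natCast]
  ring

theorem hopFwd_mulSingle_pow {w : ℂ} (hw : w ≠ 0) (j i : Fin d) :
    hopFwd hq (Pi.mulSingle j (w ^ q j) * z) i = (Pi.mulSingle j w : Fin d → ℂ) i •
      (diagonal (gauge w j) * hopFwd hq z i * diagonal (gauge w j)⁻¹) := by
  ext n n'
  simp only [Matrix.smul_apply, gauge_conj_apply hw, hopFwd, of_apply, extPer_mulSingle_pow_mul]
  by_cases h : i = j
  · subst h
    simp only [if_pos, Pi.mulSingle_eq_same, smul_eq_mul, add_sub_right_comm, zpow_add_one₀ hw]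
    ring
  · simp [h, Ne.symm h]

theorem hopBwd_mulSingle_pow {w : ℂ} (hw : w ≠ 0) (j i : Fin d) :
    hopBwd hq (Pi.mulSingle j (w ^ q j) * z) i = ((Pi.mulSingle j w : Fin d → ℂ) i)⁻¹ •
      (diagonal (gauge w j) * hopBwd hq z i * diagonal (gauge w j)⁻¹) := by
  ext n n'
  simp only [Matrix.smul_apply, gauge_conj_apply hw, hopBwd, of_apply, extPer_mulSingle_pow_mul]
  by_cases h : i = j
  · subst h
    simp only [if_pos, Pi.mulSingle_eq_same, smul_eq_mul, sub_right_comm, zpow_sub_one₀ hw]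
    ring
  · simp [h, Ne.symm h]

theorem DVmat_mulSingle_pow {w : ℂ} (hw : w ≠ 0) (j : Fin d) :
    DVmat q hq V (Pi.mulSingle j (w ^ q j) * z)
      = diagonal (gauge w j) * weightedDV hq V z (Pi.mulSingle j w)
        * diagonal (gauge w j)⁻¹ := by
  have hpot : diagonal (gauge w j) * potential V * diagonal (gauge w j)⁻¹
      = (potential V : Matrix (Cell q) (Cell q) ℂ) := by
    rw [potential, diagonal_mul_diagonal, diagonal_mul_diagonal]
    exact congrArg diagonal (funext fun n => by simp only [Pi.inv_apply, gauge]; field_simp)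
  simp only [DVmat_eq_weightedDV_one, weightedDV, hopFwd_mulSingle_pow hq z hw,
    hopBwd_mulSingle_pow hq z hw, Pi.one_apply, inv_one, one_smul, Matrix.mul_add,
    Matrix.add_mul, Finset.mul_sum, Finset.sum_mul, Matrix.mul_smul, Matrix.smul_mul, hpot]

theorem PVfun_mulSingle_pow {w : ℂ} (hw : w ≠ 0) (j : Fin d) (lam : ℂ) :
    PVfun q hq V (Pi.mulSingle j (w ^ q j) * z) lam
      = (weightedDV hq V z (Pi.mulSingle j w) - lam • 1).det := by
  have hgauge : ∀ n : Cell q, gauge w j n ≠ 0 := fun n => pow_ne_zero _ hw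
  rw [PVfun, DVmat_mulSingle_pow hq V z hw,
    ← det_diagonal_mul_mul_diagonal_inv hgauge (weightedDV hq V z _ - lam • 1), Matrix.mul_sub,
    Matrix.sub_mul, Matrix.mul_smul, Matrix.smul_mul, Matrix.mul_one,
    diagonal_mul_diagonal_inv hgauge]

variable (j : Fin d) (ω : ℂ)

noncomputable def transverse : Matrix (Cell q) (Cell q) ℂ :=
  ∑ i ∈ univ.erase j, (hopFwd hq z i + hopBwd hq z i) + potential V

noncomputable def pencil (ε : ℂ) : ℂ :=
  (ω • hopFwd hq z j - 1 + ε • transverse hq V z j + (ω⁻¹ * ε ^ 2) • hopBwd hq z j).det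

theorem continuous_pencil : Continuous (pencil hq V z j ω) := by
  unfold pencil
  fun_prop

theorem pencil_zero : pencil hq V z j ω 0 = (ω • hopFwd hq z j - 1).det := by
  simp [pencil]

theorem PVfun_eq_pencil {ω ε : ℂ} (hω : ω ≠ 0) (hε : ε ≠ 0) :
    PVfun q hq V (Pi.mulSingle j ((ω * ε⁻¹) ^ q j) * z) ε⁻¹
      = ε⁻¹ ^ Fintype.card (Cell q) * pencil hq V z j ω ε := by
  rw [PVfun_mulSingle_pow hq V z (mul_ne_zero hω (inv_ne_zero hε)), weightedDV,
    ← Finset.add_sum_erase _ _ (mem_univ j), pencil, ← det_smul]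
  congr 1
  rw [Finset.sum_congr rfl fun i hi => by
    rw [Pi.mulSingle_eq_of_ne (ne_of_mem_erase hi), inv_one, one_smul, one_smul]]
  simp only [Pi.mulSingle_eq_same, transverse]
  match_scalars <;> field_simp

end Floquet

open Floquet in
theorem statement13_general
    {d : ℕ} (q : Fin d → ℕ) (hq : ∀ j, 0 < q j)
    (V : (Fin d → ℤ) → ℝ)
 :
    ∀ ζ : Fin d → ℂ, (∀ j, ‖ζ j‖ = 1) → ζ ≠ (fun _ => 1) →
      ∃ (z : Fin d → ℂ) (lam : ℂ), (∀ j, z j ≠ 0) ∧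
        PVfun q hq V z lam ≠ PVfun q hq V (fun j => ζ j * z j) lam := by
  intro ζ hζ hζ1
  by_contra! hP
  obtain ⟨j, hj⟩ := Function.ne_iff.mp hζ1
  obtain ⟨ω, hω⟩ := IsAlgClosed.exists_pow_nat_eq (ζ j) (hq j)
  have hω0 : ω ≠ 0 := by
    rintro rfl
    simpa [zero_pow (hq j).ne', ← hω] using hζ j
  have hpencil : pencil hq V 1 j 1 = pencil hq V (Function.update ζ j 1) j ω :=
    (continuous_pencil ..).ext_on (dense_compl_singleton 0) (continuous_pencil ..)
      fun ε (hε : ε ≠ 0) => by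
        have h := hP (Pi.mulSingle j ((1 * ε⁻¹) ^ q j) * 1) ε⁻¹ fun i => by
          by_cases hi : i = j
          · subst hi; simp [hε]
          · simp [hi]
        have hζz : (fun i => ζ i * (Pi.mulSingle j ((1 * ε⁻¹) ^ q j) * 1 : Fin d → ℂ) i)
            = Pi.mulSingle j ((ω * ε⁻¹) ^ q j) * Function.update ζ j 1 := by
          funext i
          by_cases hi : i = j
          · subst hi; simp [mul_pow, hω]
          · simp [hi]
        rw [hζz, PVfun_eq_pencil hq V _ j one_ne_zero hε, PVfun_eq_pencil hq V _ j hω0 hε] at h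
        exact mul_left_cancel₀ (pow_ne_zero _ (inv_ne_zero hε)) h
  have hdet := congrFun hpencil 0
  rw [pencil_zero, pencil_zero, one_smul,
    hopFwd_congr hq (Function.update ζ j 1) (z' := 1) (by simp), det_hopFwd_one_sub_one] at hdet
  exact hj (hω ▸ pow_eq_one_of_det_smul_sub_one_eq_zero (hopFwd_one_pow_period hq j) hdet.symm)

theorem statement13
    {d : ℕ} (hd : 0 < d) (q : Fin d → ℕ) (hq : ∀ j, 0 < q j)
    (V : (Fin d → ℤ) → ℝ)
    (hper : ∀ (n : Fin d → ℤ) (j : Fin d),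
      V (fun i => n i + if i = j then (q j : ℤ) else 0) = V n)
 :
    ∀ ζ : Fin d → ℂ, (∀ j, ‖ζ j‖ = 1) → ζ ≠ (fun _ => 1) →
      ∃ (z : Fin d → ℂ) (lam : ℂ), (∀ j, z j ≠ 0) ∧
        PVfun q hq V z lam ≠ PVfun q hq V (fun j => ζ j * z j) lam :=
  statement13_general q hq V
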